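/- Let u be a polynomial function on ℝ^d of total degree at most n. Suppose the weighted moment matrix A = Σ_j w_j p(r_j) p(r_j)ᵀ is invertible, where p(r) is the vector of monomials r^β/β! over multi-indices β with 1 ≤ |β| ≤ n and r_j = x_j - x_i. Then the discrete nonlocal operator A⁻¹ Σ_j w_j (u(x_j) - u(x_i)) p(r_j) equals the vector of exact partial derivatives (∂^β u(x_i))_{1 ≤ |β| ≤ n}. -/

import Mathlib

/-!
Taylor's formula is exact for polynomials: if `u` has total degree at most `n`, then
`u(xᵢ + r) = u(xᵢ) + p(r) ⬝ D` with `D = (∂^β u(xᵢ))_{1 ≤ |β| ≤ n}`. For a monomial this is the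
binomial theorem in each coordinate together with `∂^β x^α = α!/(α-β)! x^(α-β)`. Hence the
weighted right-hand side `∑ⱼ wⱼ (u(xⱼ) - u(xᵢ)) p(rⱼ) = ∑ⱼ wⱼ p(rⱼ) (p(rⱼ) ⬝ D)` is exactly `A D`,
and applying `A⁻¹` returns `D`.
-/

open Matrix

/-- Iterated partial derivative `∂^β` of a multivariate polynomial. -/
noncomputable def pderivPow {d : ℕ} (β : Fin d → ℕ) :
    MvPolynomial (Fin d) ℝ →ₗ[ℝ] MvPolynomial (Fin d) ℝ :=
  (List.ofFn fun i : Fin d => ((MvPolynomial.pderiv i).toLinearMap ^ β i)).prod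

open MvPolynomial Finsupp

theorem add_pow_eq_sum_fin {R : Type*} [CommSemiring R] {m n : ℕ} (hm : m ≤ n) (a b : R) :
    (a + b) ^ m = ∑ k : Fin (n + 1), (m.choose k * a ^ (m - k) * b ^ (k : ℕ)) := by
  rw [Fin.sum_univ_eq_sum_range (fun k => m.choose k * a ^ (m - k) * b ^ k), add_comm, add_pow]
  refine Finset.sum_subset (Finset.range_subset_range.mpr (Nat.succ_le_succ hm))
    (fun k _ hk => ?_) |>.trans (Finset.sum_congr rfl fun k _ => by ring)
  rw [Nat.choose_eq_zero_of_lt (by simpa using hk), Nat.cast_zero, mul_zero]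

theorem Matrix.sum_smul_vecMulVec_self_mulVec {ι I R : Type*} [Fintype I] [CommSemiring R]
    (s : Finset ι) (w : ι → R) (p : ι → I → R) (v : I → R) :
    (∑ j ∈ s, w j • vecMulVec (p j) (p j)) *ᵥ v = ∑ j ∈ s, (w j * (p j ⬝ᵥ v)) • p j := by
  simp only [sum_mulVec, smul_mulVec, vecMulVec_mulVec, op_smul_eq_smul, smul_smul]

section Monomial

variable {R σ : Type*} [CommSemiring R]

theorem pderiv_pow_monomial (i : σ) (k : ℕ) (s : σ →₀ ℕ) (a : R) :
    ((pderiv i).toLinearMap ^ k) (monomial s a)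
      = monomial (s - single i k) (a * (s i).descFactorial k) := by
  induction k generalizing s a with
  | zero => simp
  | succ k ih =>
    rw [pow_succ, Module.End.mul_apply, Derivation.coeFn_coe, pderiv_monomial, ih,
      tsub_tsub, ← Finsupp.single_add, add_comm 1 k, tsub_apply, single_eq_same, mul_assoc,
      ← Nat.cast_mul]
    congr 3
    cases s i with
    | zero => simp
    | succ m => exact (Nat.succ_descFactorial_succ m k).symm

theorem prod_ofFn_pderiv_pow_monomial {m : ℕ} (g : Fin m → σ) (hg : g.Injective)
    (β : Fin m → ℕ) (s : σ →₀ ℕ) (a : R) :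
    (List.ofFn fun i => (pderiv (g i)).toLinearMap ^ β i).prod (monomial s a)
      = monomial (s - ∑ i, single (g i) (β i)) (a * ∏ i, (s (g i)).descFactorial (β i)) := by
  induction m with
  | zero => simp
  | succ m ih =>
    have hz : (∑ i : Fin m, single (g i.succ) (β i.succ)) (g 0) = 0 := by
      rw [finsetSum_apply]
      exact Finset.sum_eq_zero fun i _ => single_eq_of_ne fun h => i.succ_ne_zero (hg h.symm)
    rw [List.ofFn_succ, List.prod_cons, Module.End.mul_apply,
      ih (fun i => g i.succ) (hg.comp (Fin.succ_injective m)), pderiv_pow_monomial, tsub_tsub,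
      Fin.sum_univ_succ, add_comm, tsub_apply, hz, Nat.sub_zero,
      Fin.prod_univ_succ]
    congr 1
    push_cast
    ring

end Monomial

section MultiIndex

variable {d n : ℕ}

theorem pderivPow_monomial (β : Fin d → ℕ) (s : Fin d →₀ ℕ) (c : ℝ) :
    pderivPow β (monomial s c)
      = monomial (s - ∑ i, single i (β i)) (c * ∏ i, (s i).descFactorial (β i)) :=
  prod_ofFn_pderiv_pow_monomial id Function.injective_id β s c

theorem pderivPow_zero : pderivPow (fun _ : Fin d => 0) = 1 :=
  List.prod_eq_one fun _ h => by
    obtain ⟨i, rfl⟩ := List.mem_ofFn.mp h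
    exact pow_zero _

theorem pderivPow_eq_zero_of_totalDegree_lt {u : MvPolynomial (Fin d) ℝ}
    {β : Fin d → ℕ} (h : u.totalDegree < ∑ i, β i) : pderivPow β u = 0 := by
  rw [← support_sum_monomial_coeff u, map_sum]
  refine Finset.sum_eq_zero fun s hs => ?_
  obtain ⟨i, hi⟩ : ∃ i, s i < β i := by
    by_contra! hle
    have hdeg := le_totalDegree hs
    rw [Finsupp.sum_fintype _ _ fun _ => rfl] at hdeg
    exact (Finset.sum_le_sum fun i _ => hle i).not_gt (hdeg.trans_lt h)
  rw [pderivPow_monomial, Finset.prod_eq_zero (Finset.mem_univ i)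
    (Nat.descFactorial_eq_zero_iff_lt.mpr hi), Nat.cast_zero, mul_zero, monomial_zero]

noncomputable def scaledMonomial (r : Fin d → ℝ) (β : Fin d → Fin (n + 1)) : ℝ :=
  (∏ i, r i ^ (β i : ℕ)) / (∏ i, Nat.factorial (β i) : ℕ)

theorem eval_pderivPow_monomial_mul_scaledMonomial (β : Fin d → Fin (n + 1))
    (s : Fin d →₀ ℕ) (c : ℝ) (x r : Fin d → ℝ) :
    eval x (pderivPow (fun i => β i) (monomial s c)) * scaledMonomial r β
      = c * ∏ i, ((s i).choose (β i) * x i ^ (s i - β i) * r i ^ (β i : ℕ)) := by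
  simp only [pderivPow_monomial, eval_monomial, Finsupp.prod_pow, tsub_apply,
    coe_univ_sum_single, scaledMonomial, Nat.descFactorial_eq_factorial_mul_choose]
  push_cast
  simp only [Finset.prod_mul_distrib]
  field_simp

theorem eval_add_monomial_eq_sum_pderivPow {s : Fin d →₀ ℕ} (hs : ∀ i, s i ≤ n) (c : ℝ)
    (x r : Fin d → ℝ) :
    eval (x + r) (monomial s c) = ∑ β : Fin d → Fin (n + 1),
      eval x (pderivPow (fun i => β i) (monomial s c)) * scaledMonomial r β := by
  simp only [eval_pderivPow_monomial_mul_scaledMonomial, ← Finset.mul_sum, eval_monomial,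
    Finsupp.prod_pow, Pi.add_apply, add_pow_eq_sum_fin (hs _), Fintype.prod_sum]

theorem eval_add_eq_sum_pderivPow {u : MvPolynomial (Fin d) ℝ} (hu : u.totalDegree ≤ n)
    (x r : Fin d → ℝ) :
    eval (x + r) u = ∑ β : Fin d → Fin (n + 1),
      eval x (pderivPow (fun i => β i) u) * scaledMonomial r β := by
  have hs : ∀ s ∈ u.support, ∀ i, s i ≤ n := fun s hs i =>
    (le_degreeOf_of_mem_support i hs).trans ((degreeOf_le_totalDegree u i).trans hu)
  conv_lhs => rw [← support_sum_monomial_coeff u, map_sum]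
  rw [Finset.sum_congr rfl fun s h => eval_add_monomial_eq_sum_pderivPow (hs s h) _ x r,
    Finset.sum_comm]
  simp only [← Finset.sum_mul, ← map_sum, support_sum_monomial_coeff]

abbrev MultiIndex (d n : ℕ) :=
  {β : Fin d → Fin (n + 1) // 1 ≤ ∑ i, (β i : ℕ) ∧ ∑ i, (β i : ℕ) ≤ n}

theorem sum_eq_add_sum_multiIndex {M : Type*} [AddCommMonoid M]
    (f : (Fin d → Fin (n + 1)) → M) (hf : ∀ β, n < ∑ i, (β i : ℕ) → f β = 0) :
    ∑ β, f β = f 0 + ∑ β : MultiIndex d n, f β.1 := by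
  have hpos : ∀ β : Fin d → Fin (n + 1), 1 ≤ ∑ i, (β i : ℕ) ↔ β ≠ 0 := fun β => by
    simp only [Nat.one_le_iff_ne_zero, ne_eq, Finset.sum_eq_zero_iff, Finset.mem_univ,
      true_imp_iff, funext_iff, Fin.ext_iff, Pi.zero_apply, Fin.val_zero]
  rw [← Finset.sum_filter_of_ne (p := fun β => ∑ i, (β i : ℕ) ≤ n)
      fun β _ h => not_lt.mp (mt (hf β) h),
    ← Finset.add_sum_erase _ _ (by simp : (0 : Fin d → Fin (n + 1)) ∈ _)]
  congr 1
  exact Finset.sum_subtype _ (fun β => by simp [hpos, and_comm]) _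

theorem eval_add_sub_eval_eq_dotProduct {u : MvPolynomial (Fin d) ℝ}
    (hu : u.totalDegree ≤ n) (x r : Fin d → ℝ) :
    eval (x + r) u - eval x u
      = (fun β : MultiIndex d n => scaledMonomial r β.1) ⬝ᵥ
          fun β => eval x (pderivPow (fun i => β.1 i) u) := by
  rw [eval_add_eq_sum_pderivPow hu, sum_eq_add_sum_multiIndex, dotProduct]
  · simp [scaledMonomial, pderivPow_zero, mul_comm]
  · intro β hβ
    rw [pderivPow_eq_zero_of_totalDegree_lt (hu.trans_lt hβ), map_zero, zero_mul]

end MultiIndex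

theorem stmt_10_general (d n N : ℕ)
    (u : MvPolynomial (Fin d) ℝ) (hu : u.totalDegree ≤ n)
    (xi : Fin d → ℝ) (x : Fin N → Fin d → ℝ)
    (w : Fin N → ℝ) :
    -- index set of multi-indices β with 1 ≤ |β| ≤ n
    let I := {β : Fin d → Fin (n + 1) //
      1 ≤ ∑ i, (β i : ℕ) ∧ ∑ i, (β i : ℕ) ≤ n}
    -- the vector of scaled monomials p(r)
    let pvec : (Fin d → ℝ) → I → ℝ := fun r β =>
      (∏ i, r i ^ (β.1 i : ℕ)) / (∏ i, Nat.factorial (β.1 i) : ℕ)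
    let A : Matrix I I ℝ :=
      ∑ j, w j • vecMulVec (pvec (x j - xi)) (pvec (x j - xi))
    ∀ _hA : IsUnit A,
      A⁻¹ *ᵥ (∑ j, (w j * (MvPolynomial.eval (x j) u
            - MvPolynomial.eval xi u)) • pvec (x j - xi))
        = fun β : I =>
            MvPolynomial.eval xi (pderivPow (fun i => (β.1 i : ℕ)) u) := by
  intro I pvec A hA
  have taylor : ∀ j, eval (x j) u - eval xi u
      = pvec (x j - xi) ⬝ᵥ fun β => eval xi (pderivPow (fun i => β.1 i) u) := fun j => by
    have h := eval_add_sub_eval_eq_dotProduct hu xi (x j - xi)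
    rwa [add_sub_cancel] at h
  have := hA.invertible
  exact inv_mulVec_eq_vec (by simp only [taylor, A, sum_smul_vecMulVec_self_mulVec])

/-- Exact polynomial reproduction of the nonlocal operator method: for a
polynomial `u` of total degree at most `n`, with invertible moment matrix
`A = ∑ⱼ wⱼ p(rⱼ) p(rⱼ)ᵀ` where `p(r) = (r^β/β!)_{1 ≤ |β| ≤ n}` and
`rⱼ = xⱼ - xᵢ`, the discrete nonlocal operator
`A⁻¹ ∑ⱼ wⱼ (u(xⱼ) - u(xᵢ)) p(rⱼ)` equals the vector of exact partial
derivatives `(∂^β u (xᵢ))_{1 ≤ |β| ≤ n}`. -/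
theorem stmt_10 (d n N : ℕ) (hd : 0 < d) (hn : 0 < n)
    (u : MvPolynomial (Fin d) ℝ) (hu : u.totalDegree ≤ n)
    (xi : Fin d → ℝ) (x : Fin N → Fin d → ℝ)
    (w : Fin N → ℝ) (hw : ∀ j, 0 < w j) :
    -- index set of multi-indices β with 1 ≤ |β| ≤ n
    let I := {β : Fin d → Fin (n + 1) //
      1 ≤ ∑ i, (β i : ℕ) ∧ ∑ i, (β i : ℕ) ≤ n}
    -- the vector of scaled monomials p(r)
    let pvec : (Fin d → ℝ) → I → ℝ := fun r β =>
      (∏ i, r i ^ (β.1 i : ℕ)) / (∏ i, Nat.factorial (β.1 i) : ℕ)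
    let A : Matrix I I ℝ :=
      ∑ j, w j • vecMulVec (pvec (x j - xi)) (pvec (x j - xi))
    ∀ _hA : IsUnit A,
      A⁻¹ *ᵥ (∑ j, (w j * (MvPolynomial.eval (x j) u
            - MvPolynomial.eval xi u)) • pvec (x j - xi))
        = fun β : I =>
            MvPolynomial.eval xi (pderivPow (fun i => (β.1 i : ℕ)) u) :=
  stmt_10_general d n N u hu xi x w
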